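/- Let γ be a Poisson point process on ℂ with intensity the Lebesgue measure m, and let p ≥ 2. Then for π_m-almost every configuration γ, the infinite product Π_p(z, γ) = ∏_{x ∈ γ, x ≠ 0} E_p(z/x) converges locally uniformly in z and defines an entire function of z ∈ ℂ whose zero set is exactly γ \ {0}, each zero being simple (almost surely). -/

import Mathlib

/-!
A product `∏ (1 + uᵢ)` with `∑ ‖uᵢ‖ < ∞` converges, and it vanishes only if a factor does, because
it equals `exp (∑ log (1 + uᵢ))`. Since `‖E_p w - 1‖ ≤ 4 ‖w‖ ^ (p + 1)` for `‖w‖ ≤ 1/2`, the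
product `∏ E_p (z / x)` therefore converges uniformly on compact sets as soon as
`∑_{x ∈ γ \ {0}} ‖x‖⁻¹ ^ (p + 1) < ∞`; its limit is entire, its zeros are the points of `γ \ {0}`,
and near such a point `x` it is `E_p (z / x)` times an entire function that does not vanish at
`x`, so the zero is simple.

That series converges almost surely because `p + 1 > 2`. Truncating `(1 + ‖x‖) ^ (-(p + 1))`, which
is Lebesgue integrable on `ℂ`, to compactly supported `f ≤ 1`, the Laplace functional gives
`E[exp ∑_{x ∈ γ} f x] = exp ∫ (exp f - 1) ≤ exp (2 ∫ f)`, uniformly in the truncation; monotone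
convergence then shows that the full sum over `γ` is almost surely finite.
-/

open Complex MeasureTheory Filter

noncomputable def weierstrassE (p : ℕ) (z : ℂ) : ℂ :=
  (1 - z) * Complex.exp (∑ k ∈ Finset.Icc 1 p, z ^ k / (k : ℂ))

instance : MeasurableSpace (Set ℂ) :=
  .generateFrom {A | ∃ (B : Set ℂ) (n : ℕ), MeasurableSet B ∧ A = {γ | (γ ∩ B).ncard = n}}

def IsPoissonPP (π : Measure (Set ℂ)) (σ : Measure ℂ) : Prop :=
  IsProbabilityMeasure π ∧
  (∀ᵐ γ ∂π, ∀ K : Set ℂ, IsCompact K → (γ ∩ K).Finite) ∧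
  ∀ f : ℂ → ℝ, Continuous f → HasCompactSupport f →
    ∫ γ, Real.exp (∑' x : γ, f (x : ℂ)) ∂π =
      Real.exp (∫ x, (Real.exp (f x) - 1) ∂σ)

lemma weierstrassE_eq_zero_iff {p : ℕ} {w : ℂ} : weierstrassE p w = 0 ↔ w = 1 := by
  rw [weierstrassE, mul_eq_zero, sub_eq_zero, eq_comm]
  simp [exp_ne_zero]

lemma differentiable_weierstrassE (p : ℕ) : Differentiable ℂ (weierstrassE p) := by
  unfold weierstrassE; fun_prop

lemma hasDerivAt_weierstrassE_one (p : ℕ) :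
    HasDerivAt (weierstrassE p) (-cexp (∑ k ∈ Finset.Icc 1 p, 1 / (k : ℂ))) 1 := by
  have hexp : DifferentiableAt ℂ (fun w : ℂ ↦ cexp (∑ k ∈ Finset.Icc 1 p, w ^ k / (k : ℂ))) 1 := by
    fun_prop
  have h := ((hasDerivAt_id (1 : ℂ)).const_sub 1).mul hexp.hasDerivAt
  simp only [id, sub_self, zero_mul, add_zero, neg_one_mul, one_pow] at h
  exact h

lemma Complex.logTaylor_succ_neg (p : ℕ) (w : ℂ) :
    logTaylor (p + 1) (-w) = -∑ k ∈ Finset.Icc 1 p, w ^ k / k := by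
  induction p with
  | zero => simp [logTaylor_succ, logTaylor_zero]
  | succ p ih =>
    have hsign : (-1 : ℂ) ^ (p + 1 + 1) * (-w) ^ (p + 1) = -w ^ (p + 1) := by
      rw [pow_succ, mul_right_comm, ← mul_pow]
      simp
    rw [logTaylor_succ, Pi.add_apply, ih, Finset.sum_Icc_succ_top (by omega), hsign]
    push_cast
    ring

lemma norm_weierstrassE_sub_one_le (p : ℕ) {w : ℂ} (hw : ‖w‖ ≤ 1 / 2) :
    ‖weierstrassE p w - 1‖ ≤ 4 * ‖w‖ ^ (p + 1) := by
  set L := log (1 + -w) - logTaylor (p + 1) (-w)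
  have hL : ‖L‖ ≤ 2 * ‖w‖ ^ (p + 1) := by
    have hw1 : (1 - ‖w‖)⁻¹ ≤ 2 := by rw [inv_le_comm₀] <;> linarith
    calc ‖L‖ ≤ ‖-w‖ ^ (p + 1) * (1 - ‖-w‖)⁻¹ / (p + 1) :=
          norm_log_sub_logTaylor_le p (by rw [norm_neg]; linarith)
      _ ≤ ‖w‖ ^ (p + 1) * 2 / 1 := by
          rw [norm_neg]; gcongr; norm_cast; omega
      _ = 2 * ‖w‖ ^ (p + 1) := by ring
  have hE : weierstrassE p w = cexp L := by
    have hw1 : 1 + -w ≠ 0 := fun h ↦ by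
      rw [show w = 1 by linear_combination -h] at hw
      norm_num at hw
    rw [exp_sub, exp_log hw1, logTaylor_succ_neg, exp_neg, div_inv_eq_mul, weierstrassE,
      sub_eq_add_neg]
  have hL1 : ‖L‖ ≤ 1 := by
    have : ‖w‖ ^ (p + 1) ≤ ‖w‖ := pow_le_of_le_one (norm_nonneg w) (by linarith) (by omega)
    linarith
  calc ‖weierstrassE p w - 1‖ = ‖cexp L - 1‖ := by rw [hE]
    _ ≤ 2 * ‖L‖ := norm_exp_sub_one_le hL1
    _ ≤ 4 * ‖w‖ ^ (p + 1) := by linarith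

lemma Complex.tprod_one_add_ne_zero {ι : Type*} {f : ι → ℂ} (hf : Summable f)
    (hf0 : ∀ i, 1 + f i ≠ 0) : ∏' i, (1 + f i) ≠ 0 := by
  rw [← cexp_tsum_eq_tprod hf0 (summable_log_one_add_of_summable hf)]
  exact exp_ne_zero _

section WeierstrassProduct

variable {ι : Type*} {p : ℕ} {a : ι → ℂ}

lemma eventually_norm_weierstrassE_div_sub_one_le (hsum : Summable fun i ↦ ‖a i‖⁻¹ ^ (p + 1))
    (R : ℝ) : ∀ᶠ i in cofinite, ∀ z ∈ Metric.closedBall (0 : ℂ) R,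
      ‖weierstrassE p (z / a i) - 1‖ ≤ 4 * R ^ (p + 1) * ‖a i‖⁻¹ ^ (p + 1) := by
  set c : ℝ := (2 * (|R| + 1))⁻¹
  have hc : 0 < c := by positivity
  filter_upwards [hsum.tendsto_cofinite_zero.eventually_lt_const (pow_pos hc (p + 1))]
    with i hi z hz
  rw [mem_closedBall_zero_iff] at hz
  have hai : ‖a i‖⁻¹ < c := lt_of_pow_lt_pow_left₀ _ hc.le hi
  have hzi : ‖z / a i‖ = ‖z‖ * ‖a i‖⁻¹ := by rw [norm_div, div_eq_mul_inv]
  have hhalf : ‖z / a i‖ ≤ 1 / 2 := by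
    have : |R| * c ≤ 1 / 2 := by
      rw [← div_eq_mul_inv, div_le_iff₀ (by positivity)]; linarith [abs_nonneg R]
    rw [hzi]
    calc ‖z‖ * ‖a i‖⁻¹ ≤ |R| * c := by
          gcongr; exact hz.trans (le_abs_self R)
      _ ≤ 1 / 2 := this
  calc ‖weierstrassE p (z / a i) - 1‖ ≤ 4 * ‖z / a i‖ ^ (p + 1) :=
        norm_weierstrassE_sub_one_le p hhalf
    _ ≤ 4 * R ^ (p + 1) * ‖a i‖⁻¹ ^ (p + 1) := by
        rw [hzi, mul_pow, mul_assoc]; gcongr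

lemma summable_weierstrassE_div_sub_one (hsum : Summable fun i ↦ ‖a i‖⁻¹ ^ (p + 1)) (z : ℂ) :
    Summable fun i ↦ weierstrassE p (z / a i) - 1 :=
  (hsum.mul_left _).of_norm_bounded_eventually <|
    (eventually_norm_weierstrassE_div_sub_one_le hsum ‖z‖).mono fun _ hi ↦ hi z (by simp)

lemma multipliable_weierstrassE_div (hsum : Summable fun i ↦ ‖a i‖⁻¹ ^ (p + 1)) (z : ℂ) :
    Multipliable fun i ↦ weierstrassE p (z / a i) := by
  simpa using Complex.multipliable_one_add_of_summable (summable_weierstrassE_div_sub_one hsum z)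

lemma hasProdUniformlyOn_weierstrassE_div (hsum : Summable fun i ↦ ‖a i‖⁻¹ ^ (p + 1))
    {K : Set ℂ} (hK : IsCompact K) :
    HasProdUniformlyOn (fun i z ↦ weierstrassE p (z / a i))
      (fun z ↦ ∏' i, weierstrassE p (z / a i)) K := by
  obtain ⟨R, hR⟩ := hK.isBounded.subset_closedBall 0
  simpa using Summable.hasProdUniformlyOn_one_add hK (hsum.mul_left (4 * R ^ (p + 1)))
    ((eventually_norm_weierstrassE_div_sub_one_le hsum R).mono fun _ hi z hz ↦ hi z (hR hz))
    fun i ↦ (((differentiable_weierstrassE p).comp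
      (differentiable_id.div_const (a i))).continuous.sub continuous_const).continuousOn

lemma differentiable_tprod_weierstrassE_div (hsum : Summable fun i ↦ ‖a i‖⁻¹ ^ (p + 1)) :
    Differentiable ℂ fun z ↦ ∏' i, weierstrassE p (z / a i) := by
  have hprod : HasProdLocallyUniformlyOn (fun i z ↦ weierstrassE p (z / a i))
      (fun z ↦ ∏' i, weierstrassE p (z / a i)) Set.univ :=
    hasProdLocallyUniformlyOn_of_forall_compact isOpen_univ fun K _ hK ↦
      hasProdUniformlyOn_weierstrassE_div hsum hK
  rw [← differentiableOn_univ]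
  refine hprod.differentiableOn (Eventually.of_forall fun s ↦ ?_) isOpen_univ
  exact (Differentiable.fun_finsetProd fun i _ ↦ (differentiable_weierstrassE p).comp
      (differentiable_id.div_const (a i))).differentiableOn

lemma tprod_weierstrassE_div_ne_zero (hsum : Summable fun i ↦ ‖a i‖⁻¹ ^ (p + 1)) {z : ℂ}
    (hz : ∀ i, z / a i ≠ 1) : ∏' i, weierstrassE p (z / a i) ≠ 0 := by
  simpa using Complex.tprod_one_add_ne_zero (summable_weierstrassE_div_sub_one hsum z)
    (by simpa [weierstrassE_eq_zero_iff] using hz)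

lemma tprod_weierstrassE_div_eq_zero_iff (hsum : Summable fun i ↦ ‖a i‖⁻¹ ^ (p + 1))
    (ha : ∀ i, a i ≠ 0) (z : ℂ) : ∏' i, weierstrassE p (z / a i) = 0 ↔ z ∈ Set.range a := by
  refine ⟨fun h ↦ ?_, ?_⟩
  · by_contra hz
    exact tprod_weierstrassE_div_ne_zero hsum
      (fun i hi ↦ hz ⟨i, ((div_eq_one_iff_eq (ha i)).mp hi).symm⟩) h
  · rintro ⟨j, rfl⟩
    exact (hasProd_zero_of_exists_eq_zero
      ⟨j, weierstrassE_eq_zero_iff.mpr (div_self (ha j))⟩).tprod_eq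

lemma deriv_tprod_weierstrassE_div_ne_zero (hsum : Summable fun i ↦ ‖a i‖⁻¹ ^ (p + 1))
    (ha : ∀ i, a i ≠ 0) (ha_inj : Function.Injective a) (j : ι) :
    deriv (fun z ↦ ∏' i, weierstrassE p (z / a i)) (a j) ≠ 0 := by
  set g : ℂ → ℂ := fun z ↦ ∏' i : ↥({j}ᶜ : Set ι), weierstrassE p (z / a i)
  have hsum' : Summable fun i : ↥({j}ᶜ : Set ι) ↦ ‖a i‖⁻¹ ^ (p + 1) := hsum.subtype _
  have hsplit : (fun z ↦ ∏' i, weierstrassE p (z / a i)) =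
      fun z ↦ weierstrassE p (z / a j) * g z := by
    funext z
    rw [← ((Set.finite_singleton j).multipliable
      (fun i ↦ weierstrassE p (z / a i))).tprod_mul_tprod_compl
      (multipliable_weierstrassE_div hsum' z), tprod_singleton j (fun i ↦ weierstrassE p (z / a i))]
  have hg : g (a j) ≠ 0 := tprod_weierstrassE_div_ne_zero hsum' fun i hi ↦
    i.2 (ha_inj ((div_eq_one_iff_eq (ha i)).mp hi).symm)
  have hE : HasDerivAt (fun z ↦ weierstrassE p (z / a j))
      (-cexp (∑ k ∈ Finset.Icc 1 p, 1 / (k : ℂ)) * (1 / a j)) (a j) := by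
    have h1 : HasDerivAt (weierstrassE p) (-cexp (∑ k ∈ Finset.Icc 1 p, 1 / (k : ℂ)))
        (a j / a j) := by
      rw [div_self (ha j)]; exact hasDerivAt_weierstrassE_one p
    exact h1.comp (h := fun z ↦ z / a j) (a j) ((hasDerivAt_id (a j)).div_const (a j))
  rw [hsplit, (hE.fun_mul (differentiable_tprod_weierstrassE_div hsum' (a j)).hasDerivAt).deriv,
    div_self (ha j), weierstrassE_eq_zero_iff.mpr rfl, zero_mul, add_zero]
  exact mul_ne_zero (mul_ne_zero (neg_ne_zero.mpr (exp_ne_zero _)) (by simpa using ha j)) hg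

end WeierstrassProduct

section RadialCutoff

variable {E : Type*} [NormedAddCommGroup E]

noncomputable def radialCutoff (n : ℕ) (x : E) : ℝ := max 0 (min 1 (n + 1 - ‖x‖))

lemma continuous_radialCutoff (n : ℕ) : Continuous (radialCutoff (E := E) n) := by
  unfold radialCutoff; fun_prop

lemma radialCutoff_nonneg (n : ℕ) (x : E) : 0 ≤ radialCutoff n x := le_max_left _ _

lemma radialCutoff_le_one (n : ℕ) (x : E) : radialCutoff n x ≤ 1 :=
  max_le zero_le_one (min_le_left _ _)

lemma radialCutoff_eq_one {n : ℕ} {x : E} (hx : ‖x‖ ≤ n) : radialCutoff n x = 1 := by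
  rw [radialCutoff, min_eq_left (by linarith), max_eq_right zero_le_one]

lemma monotone_radialCutoff (x : E) : Monotone fun n : ℕ ↦ radialCutoff n x := fun m n hmn ↦ by
  simp only [radialCutoff]; gcongr

lemma hasCompactSupport_radialCutoff [ProperSpace E] (n : ℕ) :
    HasCompactSupport (radialCutoff (E := E) n) := by
  refine HasCompactSupport.intro (isCompact_closedBall 0 (n + 1)) fun x hx ↦ ?_
  rw [mem_closedBall_zero_iff, not_le] at hx
  rw [radialCutoff, max_eq_left ((min_le_right _ _).trans (by linarith))]

end RadialCutoff

lemma summable_subtype_of_hasCompactSupport {α M : Type*} [TopologicalSpace α] [AddCommMonoid M]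
    [TopologicalSpace M] {γ : Set α} (hγ : ∀ K, IsCompact K → (γ ∩ K).Finite) {f : α → M}
    (hf : HasCompactSupport f) : Summable fun x : γ ↦ f x :=
  summable_of_hasFiniteSupport <| ((hγ _ hf).preimage Subtype.val_injective.injOn).subset
    fun x hx ↦ ⟨x.2, subset_tsupport f hx⟩

namespace IsPoissonPP

variable {π : Measure (Set ℂ)} {σ : Measure ℂ}

/-- The Laplace functional is positive, so it cannot be the junk value `0` of the integral of a
non-integrable function. -/
lemma integrable_exp_tsum (hπ : IsPoissonPP π σ) {f : ℂ → ℝ} (hf : Continuous f)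
    (hfc : HasCompactSupport f) : Integrable (fun γ : Set ℂ ↦ Real.exp (∑' x : γ, f x)) π := by
  by_contra h
  have hLap := hπ.2.2 f hf hfc
  rw [integral_undef h] at hLap
  exact (Real.exp_pos _).ne' hLap.symm

lemma integral_exp_tsum_le (hπ : IsPoissonPP π σ) {f : ℂ → ℝ} (hf : Continuous f)
    (hfc : HasCompactSupport f) (hf0 : 0 ≤ f) (hf1 : f ≤ 1) (hfi : Integrable f σ) :
    ∫ γ, Real.exp (∑' x : γ, f x) ∂π ≤ Real.exp (2 * ∫ x, f x ∂σ) := by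
  rw [hπ.2.2 f hf hfc, Real.exp_le_exp, ← integral_const_mul]
  refine integral_mono_of_nonneg (ae_of_all _ fun x ↦ ?_) (hfi.const_mul 2) (ae_of_all _ fun x ↦ ?_)
  · simpa using Real.one_le_exp (hf0 x)
  · have h := Real.abs_exp_sub_one_le (x := f x) (by rw [abs_of_nonneg (hf0 x)]; exact hf1 x)
    rw [abs_of_nonneg (hf0 x)] at h
    exact (le_abs_self _).trans h

lemma ae_bddAbove_tsum_mul_radialCutoff (hπ : IsPoissonPP π σ) {g : ℂ → ℝ} (hg : Continuous g)
    (hg0 : 0 ≤ g) (hg1 : g ≤ 1) (hgi : Integrable g σ) :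
    ∀ᵐ γ : Set ℂ ∂π, BddAbove (Set.range fun n : ℕ ↦ ∑' x : γ, g x * radialCutoff n (x : ℂ)) := by
  set f : ℕ → ℂ → ℝ := fun n x ↦ g x * radialCutoff n x
  have hfc : ∀ n, HasCompactSupport (f n) := fun n ↦ (hasCompactSupport_radialCutoff n).mul_left
  have hfcont : ∀ n, Continuous (f n) := fun n ↦ hg.mul (continuous_radialCutoff n)
  have hf0 : ∀ n, 0 ≤ f n := fun n x ↦ mul_nonneg (hg0 x) (radialCutoff_nonneg n x)
  have hfg : ∀ n, f n ≤ g := fun n x ↦ mul_le_of_le_one_right (hg0 x) (radialCutoff_le_one n x)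
  have hfi : ∀ n, Integrable (f n) σ := fun n ↦ hgi.mono' (hfcont n).aestronglyMeasurable
    (ae_of_all _ fun x ↦ by rw [Real.norm_of_nonneg (hf0 n x)]; exact hfg n x)
  set F : ℕ → Set ℂ → ENNReal := fun n γ ↦ ENNReal.ofReal (Real.exp (∑' x : γ, f n x))
  have hF_meas : ∀ n, AEMeasurable (F n) π := fun n ↦
    (hπ.integrable_exp_tsum (hfcont n) (hfc n)).aemeasurable.ennreal_ofReal
  have hF_mono : ∀ᵐ γ ∂π, Monotone fun n ↦ F n γ := by
    filter_upwards [hπ.2.1] with γ hγ m n hmn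
    refine ENNReal.ofReal_le_ofReal (Real.exp_le_exp.mpr (Summable.tsum_le_tsum (fun x ↦ ?_)
      (summable_subtype_of_hasCompactSupport hγ (hfc m))
      (summable_subtype_of_hasCompactSupport hγ (hfc n))))
    exact mul_le_mul_of_nonneg_left (monotone_radialCutoff _ hmn) (hg0 x)
  have hF_lintegral : ∫⁻ γ, ⨆ n, F n γ ∂π ≠ ⊤ := by
    rw [lintegral_iSup' hF_meas hF_mono]
    refine ne_top_of_le_ne_top (ENNReal.ofReal_ne_top (r := Real.exp (2 * ∫ x, g x ∂σ)))
      (iSup_le fun n ↦ ?_)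
    rw [← ofReal_integral_eq_lintegral_ofReal (hπ.integrable_exp_tsum (hfcont n) (hfc n))
      (ae_of_all _ fun γ ↦ (Real.exp_pos _).le)]
    refine ENNReal.ofReal_le_ofReal ((hπ.integral_exp_tsum_le (hfcont n) (hfc n) (hf0 n)
      ((hfg n).trans hg1) (hfi n)).trans (Real.exp_le_exp.mpr ?_))
    exact mul_le_mul_of_nonneg_left (integral_mono (hfi n) hgi (hfg n)) zero_le_two
  filter_upwards [ae_lt_top' (AEMeasurable.iSup hF_meas) hF_lintegral] with γ hγF
  refine ⟨(⨆ n, F n γ).toReal, Set.forall_mem_range.mpr fun n ↦ ?_⟩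
  calc ∑' x : γ, f n x ≤ Real.exp (∑' x : γ, f n x) := by
        linarith [Real.add_one_le_exp (∑' x : γ, f n x)]
    _ ≤ (⨆ n, F n γ).toReal := (ENNReal.ofReal_le_iff_le_toReal hγF.ne).mp (le_iSup (F · γ) n)

theorem ae_summable (hπ : IsPoissonPP π σ) {g : ℂ → ℝ} (hg : Continuous g) (hg0 : 0 ≤ g)
    (hg1 : g ≤ 1) (hgi : Integrable g σ) : ∀ᵐ γ : Set ℂ ∂π, Summable fun x : γ ↦ g x := by
  filter_upwards [hπ.2.1, hπ.ae_bddAbove_tsum_mul_radialCutoff hg hg0 hg1 hgi]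
    with γ hγ ⟨C, hC⟩
  refine summable_of_sum_le (c := C) (fun x ↦ hg0 x) fun t ↦ ?_
  obtain ⟨n, hn⟩ : ∃ n : ℕ, ∀ x ∈ t, ‖(x : ℂ)‖ ≤ n :=
    ⟨⌈∑ x ∈ t, ‖(x : ℂ)‖⌉₊, fun x hx ↦
      (Finset.single_le_sum (f := fun y : γ ↦ ‖(y : ℂ)‖) (fun _ _ ↦ norm_nonneg _) hx).trans
        (Nat.le_ceil _)⟩
  have hcut : HasCompactSupport fun x : ℂ ↦ g x * radialCutoff n x :=
    (hasCompactSupport_radialCutoff n).mul_left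
  calc ∑ x ∈ t, g x = ∑ x ∈ t, g x * radialCutoff n (x : ℂ) :=
        Finset.sum_congr rfl fun x hx ↦ by rw [radialCutoff_eq_one (hn x hx), mul_one]
    _ ≤ ∑' x : γ, g x * radialCutoff n (x : ℂ) :=
        Summable.sum_le_tsum t (fun x _ ↦ mul_nonneg (hg0 x) (radialCutoff_nonneg n (x : ℂ)))
          (summable_subtype_of_hasCompactSupport hγ hcut)
    _ ≤ C := hC ⟨n, rfl⟩

theorem ae_summable_norm_inv_pow (hπ : IsPoissonPP π volume) {k : ℕ} (hk : 2 < k) :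
    ∀ᵐ γ : Set ℂ ∂π, Summable fun x : ↥(γ \ {0}) ↦ ‖(x : ℂ)‖⁻¹ ^ k := by
  set g : ℂ → ℝ := fun x ↦ (1 + ‖x‖) ^ (-(k : ℝ))
  have hg : Continuous g := (continuous_const.add continuous_norm).rpow_const fun x ↦
    Or.inl (add_pos_of_pos_of_nonneg one_pos (norm_nonneg x)).ne'
  have hg0 : 0 ≤ g := fun x ↦ Real.rpow_nonneg (by positivity) _
  have hg1 : g ≤ 1 := fun x ↦
    Real.rpow_le_one_of_one_le_of_nonpos (by linarith [norm_nonneg x]) (by linarith)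
  have hgi : Integrable g volume :=
    integrable_one_add_norm (by rw [Complex.finrank_real_complex]; exact_mod_cast hk)
  filter_upwards [hπ.2.1, hπ.ae_summable hg hg0 hg1 hgi] with γ hγ hsum
  have hfar : ∀ᶠ x : ↥(γ \ {0}) in cofinite, 1 ≤ ‖(x : ℂ)‖ := by
    refine eventually_cofinite.mpr (((hγ _ (isCompact_closedBall 0 1)).preimage
      Subtype.val_injective.injOn).subset fun x hx ↦ ⟨x.2.1, ?_⟩)
    simp only [Set.mem_ofPred_eq, not_le] at hx
    exact mem_closedBall_zero_iff.mpr hx.le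
  refine ((hsum.comp_injective (Set.inclusion_injective Set.sdiff_subset)).mul_left (2 ^ k)
    ).of_norm_bounded_eventually ?_
  filter_upwards [hfar] with x hx
  have hx0 : 0 < ‖(x : ℂ)‖ := one_pos.trans_le hx
  have hle : ‖(x : ℂ)‖⁻¹ ≤ 2 / (1 + ‖(x : ℂ)‖) := by
    rw [inv_eq_one_div, div_le_div_iff₀ hx0 (by positivity)]; linarith
  calc ‖‖(x : ℂ)‖⁻¹ ^ k‖ = ‖(x : ℂ)‖⁻¹ ^ k := Real.norm_of_nonneg (by positivity)
    _ ≤ (2 / (1 + ‖(x : ℂ)‖)) ^ k := by gcongr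
    _ = 2 ^ k * g x := by
        rw [div_pow, div_eq_mul_inv, ← Real.rpow_natCast (1 + _), ← Real.rpow_neg (by positivity)]

end IsPoissonPP

theorem poisson_random_entire_function
    (π : Measure (Set ℂ)) (hπ : IsPoissonPP π volume) (p : ℕ) (hp : 2 ≤ p) :
    ∀ᵐ γ ∂π, ∃ f : ℂ → ℂ, Differentiable ℂ f ∧
      (∀ K : Set ℂ, IsCompact K →
        TendstoUniformlyOn
          (fun (s : Finset ↥(γ \ ({0} : Set ℂ))) (z : ℂ) =>
            ∏ x ∈ s, weierstrassE p (z / (x : ℂ)))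
          f atTop K) ∧
      (∀ z : ℂ, f z = 0 ↔ z ∈ γ \ {0}) ∧
      (∀ z₀ ∈ γ \ {0}, deriv f z₀ ≠ 0) := by
  filter_upwards [hπ.ae_summable_norm_inv_pow (by omega : 2 < p + 1)] with γ hsum
  have ha : ∀ x : ↥(γ \ ({0} : Set ℂ)), (x : ℂ) ≠ 0 := fun x ↦ x.2.2
  refine ⟨fun z ↦ ∏' x : ↥(γ \ ({0} : Set ℂ)), weierstrassE p (z / x),
    differentiable_tprod_weierstrassE_div hsum,
    fun K hK ↦ (hasProdUniformlyOn_weierstrassE_div hsum hK).tendstoUniformlyOn,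
    fun z ↦ ?_, fun z₀ hz₀ ↦
      deriv_tprod_weierstrassE_div_ne_zero hsum ha Subtype.val_injective ⟨z₀, hz₀⟩⟩
  rw [tprod_weierstrassE_div_eq_zero_iff hsum ha, Subtype.range_coe]
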